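/- Fix a finite nonempty index set Φ, a nonempty finite outcome set A, a natural number K, for every f ∈ Φ a matrix R^f ∈ ℝ^{A×K} with rows r^f(a), and a probability distribution σ̃ on A. Define the dual objective D(λ) = Σ_{f∈Φ} max_{g∈Φ} ( (Σ_{a∈A} σ̃_a r^g(a)) · λ^f ) + log Σ_{a∈A} exp( −Σ_{f∈Φ} r^f(a)·λ^f ) for λ = (λ^f)_{f∈Φ} with each λ^f ∈ ℝ^K. Then strong duality holds: the maximum of the Shannon entropy H(σ̂) over all σ̂ in the ICE polytope determined by σ̃ equals the infimum of D(λ) over all λ ∈ (ℝ^K)^Φ. -/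

import Mathlib

open Finset

/-- Membership in the ICE polytope determined by `σt`: `σh` is a distribution on
`A` such that for every `f ∈ Φ` there is a probability vector `η ∈ Δ(Φ)` with
`σhᵀR^f = Σ_g η_g σtᵀR^g`. -/
def memICE {Φ A : Type*} [Fintype Φ] [Fintype A] {K : ℕ}
    (R : Φ → A → Fin K → ℝ) (σt σh : A → ℝ) : Prop :=
  σh ∈ stdSimplex ℝ A ∧
    ∀ f : Φ, ∃ η : Φ → ℝ, η ∈ stdSimplex ℝ Φ ∧
      ∀ k : Fin K, ∑ a, σh a * R f a k = ∑ g, η g * ∑ a, σt a * R g a k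

/-- Shannon entropy of a distribution on a finite set, with the convention
`0 · log 0 = 0` (note `Real.log 0 = 0` in Mathlib). -/
noncomputable def shannonEntropy {A : Type*} [Fintype A] (σ : A → ℝ) : ℝ :=
  -∑ a, σ a * Real.log (σ a)

/-- The dual objective of the MaxEnt ICE problem determined by `σt`. -/
noncomputable def dualObj {Φ A : Type*} [Fintype Φ] [Nonempty Φ] [Fintype A]
    {K : ℕ} (R : Φ → A → Fin K → ℝ) (σt : A → ℝ) (l : Φ → Fin K → ℝ) : ℝ :=
  (∑ f : Φ, univ.sup' univ_nonempty
      (fun g : Φ => ∑ k, (∑ a, σt a * R g a k) * l f k)) +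
    Real.log (∑ a, Real.exp (-∑ f : Φ, ∑ k, R f a k * l f k))

/-!
Weak duality is the Gibbs variational principle `H(σ) + ⟪σ, u⟫ ≤ log ∑ₐ exp uₐ` combined with
the fact that a convex combination of numbers is at most their maximum: these bound the
Lagrangian of the ICE constraints by `D(λ)`, with equality at a softmax distribution and at
point masses on maximizers.

For strong duality, suppose every ICE distribution has entropy `< q`. Then `(0, q)` lies outside
the set of pairs `(constraint residual, t)` with `t` below the entropy, which is closed and
convex because the primal domain is compact and convex and the entropy is continuous and
concave. A separating hyperplane cannot be vertical, since `σt` itself is feasible; normalizing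
it yields multipliers `λ` whose Lagrangian stays below `q` on the whole primal domain, hence
`D(λ) < q`.
-/

open Real

lemma Real.negMulLog_add_mul_log_le {x y : ℝ} (hx : 0 ≤ x) (hy : 0 < y) :
    negMulLog x + x * log y ≤ y - x := by
  have h := negMulLog_le_one_sub_self (div_nonneg hx hy.le)
  have hsplit := negMulLog_mul (x / y) y
  rw [div_mul_cancel₀ x hy.ne'] at hsplit
  calc negMulLog x + x * log y = y * negMulLog (x / y) := by
        rw [hsplit, show negMulLog y = -y * log y from rfl]; field_simp; ring
    _ ≤ y * (1 - x / y) := mul_le_mul_of_nonneg_left h hy.le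
    _ = y - x := by field_simp

section Entropy

variable {A : Type*} [Fintype A]

lemma shannonEntropy_eq_sum_negMulLog (σ : A → ℝ) :
    shannonEntropy σ = ∑ a, negMulLog (σ a) := by
  simp [shannonEntropy, negMulLog_eq_neg]

lemma concaveOn_shannonEntropy : ConcaveOn ℝ (stdSimplex ℝ A) shannonEntropy := by
  refine ⟨convex_stdSimplex ℝ A, fun σ hσ τ hτ s t hs ht hst => ?_⟩
  simp only [shannonEntropy_eq_sum_negMulLog, smul_eq_mul, Finset.mul_sum,
    ← Finset.sum_add_distrib, Pi.add_apply, Pi.smul_apply]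
  exact Finset.sum_le_sum fun a _ =>
    concaveOn_negMulLog.2 (Set.mem_Ici.2 (hσ.1 a)) (Set.mem_Ici.2 (hτ.1 a)) hs ht hst

lemma continuous_shannonEntropy : Continuous (shannonEntropy : (A → ℝ) → ℝ) := by
  simp only [funext shannonEntropy_eq_sum_negMulLog]
  fun_prop

noncomputable def softmax (u : A → ℝ) (a : A) : ℝ := exp (u a) / ∑ b, exp (u b)

variable [Nonempty A]

lemma sum_exp_pos (u : A → ℝ) : 0 < ∑ a, exp (u a) :=
  Finset.sum_pos (fun a _ => exp_pos (u a)) Finset.univ_nonempty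

lemma softmax_mem_stdSimplex (u : A → ℝ) : softmax u ∈ stdSimplex ℝ A :=
  ⟨fun a => (div_pos (exp_pos _) (sum_exp_pos u)).le,
    by simp only [softmax]; rw [← Finset.sum_div, div_self (sum_exp_pos u).ne']⟩

lemma log_softmax (u : A → ℝ) (a : A) : log (softmax u a) = u a - log (∑ b, exp (u b)) := by
  rw [softmax, log_div (exp_ne_zero _) (sum_exp_pos u).ne', log_exp]

/-- The Gibbs variational principle: `log ∑ exp u = max_σ (H(σ) + ⟪σ, u⟫)`. -/
lemma shannonEntropy_add_sum_mul_le {σ : A → ℝ} (hσ : σ ∈ stdSimplex ℝ A) (u : A → ℝ) :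
    shannonEntropy σ + ∑ a, σ a * u a ≤ log (∑ a, exp (u a)) := by
  have hq := softmax_mem_stdSimplex u
  have key : ∑ a, (negMulLog (σ a) + σ a * log (softmax u a)) ≤ ∑ a, (softmax u a - σ a) :=
    Finset.sum_le_sum fun a _ =>
      negMulLog_add_mul_log_le (hσ.1 a) (div_pos (exp_pos _) (sum_exp_pos u))
  simp only [log_softmax, Finset.sum_sub_distrib, Finset.sum_add_distrib, mul_sub,
    ← Finset.sum_mul, hσ.2, hq.2, one_mul, sub_self] at key
  rw [shannonEntropy_eq_sum_negMulLog]
  linarith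

lemma shannonEntropy_softmax_add_sum_mul (u : A → ℝ) :
    shannonEntropy (softmax u) + ∑ a, softmax u a * u a = log (∑ a, exp (u a)) := by
  have hq := softmax_mem_stdSimplex u
  have : ∀ a, negMulLog (softmax u a) + softmax u a * u a
      = softmax u a * log (∑ b, exp (u b)) := fun a => by
    rw [negMulLog, log_softmax]; ring
  rw [shannonEntropy_eq_sum_negMulLog, ← Finset.sum_add_distrib, Finset.sum_congr rfl
    fun a _ => this a, ← Finset.sum_mul, hq.2, one_mul]

end Entropy

lemma sum_mul_le_sup'_of_mem_stdSimplex {ι : Type*} [Fintype ι] [Nonempty ι] {η : ι → ℝ}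
    (hη : η ∈ stdSimplex ℝ ι) (s : ι → ℝ) :
    ∑ i, η i * s i ≤ univ.sup' univ_nonempty s :=
  calc ∑ i, η i * s i ≤ ∑ i, η i * univ.sup' univ_nonempty s :=
        Finset.sum_le_sum fun i hi => mul_le_mul_of_nonneg_left (le_sup' s hi) (hη.1 i)
    _ = univ.sup' univ_nonempty s := by rw [← Finset.sum_mul, hη.2, one_mul]

def hypographImage {E F : Type*} (X : Set E) (T : E → F) (h : E → ℝ) : Set (F × ℝ) :=
  {z | ∃ x ∈ X, T x = z.1 ∧ z.2 ≤ h x}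

lemma ConcaveOn.convex_hypographImage {E F : Type*} [AddCommGroup E] [Module ℝ E]
    [AddCommGroup F] [Module ℝ F] {X : Set E} {h : E → ℝ} (hh : ConcaveOn ℝ X h)
    (T : E →ₗ[ℝ] F) : Convex ℝ (hypographImage X T h) := by
  have hS : hypographImage X T h = T.prodMap LinearMap.id '' {p | p.1 ∈ X ∧ p.2 ≤ h p.1} := by
    ext ⟨y, t⟩
    simp only [hypographImage, Set.mem_image, Set.mem_ofPred_eq, Prod.exists,
      LinearMap.prodMap_apply, LinearMap.id_apply, Prod.mk.injEq]
    constructor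
    · rintro ⟨x, hx, rfl, ht⟩
      exact ⟨x, t, ⟨hx, ht⟩, rfl, rfl⟩
    · rintro ⟨x, t, ⟨hx, ht⟩, rfl, rfl⟩
      exact ⟨x, hx, rfl, ht⟩
  rw [hS]
  exact hh.convex_hypograph.linear_image _

open Pointwise in
lemma IsCompact.isClosed_hypographImage {E F : Type*} [TopologicalSpace E] [AddCommGroup F]
    [TopologicalSpace F] [IsTopologicalAddGroup F] [T1Space F] {X : Set E} (hX : IsCompact X)
    {T : E → F} (hT : ContinuousOn T X) {h : E → ℝ} (hh : ContinuousOn h X) :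
    IsClosed (hypographImage X T h) := by
  have hS : hypographImage X T h =
      (fun x => (T x, h x)) '' X + ({0} : Set F) ×ˢ Set.Iic (0 : ℝ) := by
    ext ⟨y, t⟩
    simp only [hypographImage, Set.mem_ofPred_eq, Set.mem_add, Set.mem_image, Set.mem_prod,
      Set.mem_singleton_iff, Set.mem_Iic]
    constructor
    · rintro ⟨x, hx, rfl, ht⟩
      exact ⟨_, ⟨x, hx, rfl⟩, (0, t - h x), ⟨rfl, by linarith⟩, by simp⟩
    · rintro ⟨_, ⟨x, hx, rfl⟩, ⟨c, s⟩, ⟨rfl, hs⟩, hsum⟩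
      simp only [Prod.mk_add_mk, add_zero, Prod.mk.injEq] at hsum
      exact ⟨x, hx, hsum.1, by linarith [hsum.2]⟩
  rw [hS]
  exact (isClosed_singleton.prod isClosed_Iic).add_left_of_isCompact
    (hX.image_of_continuousOn (hT.prodMk hh))

lemma StrongDual.exists_apply_eq_sum_mul_add_mul {ι κ : Type*} [Fintype ι] [Fintype κ]
    (φ : StrongDual ℝ ((ι → κ → ℝ) × ℝ)) :
    ∃ c : ι → κ → ℝ, ∀ y t, φ (y, t) = ∑ i, ∑ j, y i j * c i j + t * φ (0, 1) := by
  classical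
  refine ⟨fun i j => φ (Pi.single i (Pi.single j 1), 0), fun y t => ?_⟩
  have hy : (y, t) = ∑ i, ∑ j, y i j • ((Pi.single i (Pi.single j 1), 0) : (ι → κ → ℝ) × ℝ)
      + t • (0, 1) := by
    ext i j <;> simp [Prod.fst_sum, Prod.snd_sum, Finset.sum_apply, Pi.single_apply]
  rw [hy, map_add, map_smul, smul_eq_mul, mul_comm]
  simp only [map_sum, map_smul, smul_eq_mul]

namespace MaxEntICE

variable {Φ A : Type*} [Fintype Φ] [Fintype A] {K : ℕ}

def primalDomain (Φ A : Type*) [Fintype Φ] [Fintype A] : Set ((A → ℝ) × (Φ → Φ → ℝ)) :=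
  stdSimplex ℝ A ×ˢ Set.univ.pi fun _ => stdSimplex ℝ Φ

lemma isCompact_primalDomain : IsCompact (primalDomain Φ A) :=
  (isCompact_stdSimplex ℝ A).prod (isCompact_univ_pi fun _ => isCompact_stdSimplex ℝ Φ)

lemma convex_primalDomain : Convex ℝ (primalDomain Φ A) :=
  (convex_stdSimplex ℝ A).prod (convex_pi fun _ _ => convex_stdSimplex ℝ Φ)

variable (R : Φ → A → Fin K → ℝ)

def iceResidual (σt : A → ℝ) : (A → ℝ) × (Φ → Φ → ℝ) →ₗ[ℝ] Φ → Fin K → ℝ where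
  toFun x f k := ∑ a, x.1 a * R f a k - ∑ g, x.2 f g * ∑ a, σt a * R g a k
  map_add' x y := by
    ext f k
    simp only [Prod.fst_add, Prod.snd_add, Pi.add_apply, add_mul, Finset.sum_add_distrib]
    ring
  map_smul' c x := by
    ext f k
    simp only [Prod.smul_fst, Prod.smul_snd, Pi.smul_apply, smul_eq_mul, RingHom.id_apply,
      mul_assoc, ← Finset.mul_sum, mul_sub]

lemma memICE_iff (σt σ : A → ℝ) :
    memICE R σt σ ↔ ∃ η, (σ, η) ∈ primalDomain Φ A ∧ iceResidual R σt (σ, η) = 0 := by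
  simp only [memICE, primalDomain, Set.mem_prod, Set.mem_pi, Set.mem_univ, true_implies,
    funext_iff, iceResidual, LinearMap.coe_mk, AddHom.coe_mk, Pi.zero_apply, sub_eq_zero]
  constructor
  · rintro ⟨hσ, hη⟩
    choose η hη using hη
    exact ⟨η, ⟨hσ, fun f => (hη f).1⟩, fun f => (hη f).2⟩
  · rintro ⟨η, ⟨hσ, hη⟩, hres⟩
    exact ⟨hσ, fun f => ⟨η f, hη f, hres f⟩⟩

lemma memICE_self {σt : A → ℝ} (hσt : σt ∈ stdSimplex ℝ A) : memICE R σt σt := by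
  classical
  exact ⟨hσt, fun f =>
    ⟨Pi.single f 1, single_mem_stdSimplex ℝ f, fun k => by simp [Pi.single_apply]⟩⟩

noncomputable def lagrangian (σt : A → ℝ) (l : Φ → Fin K → ℝ)
    (x : (A → ℝ) × (Φ → Φ → ℝ)) : ℝ :=
  shannonEntropy x.1 - ∑ f, ∑ k, iceResidual R σt x f k * l f k

/-- The Lagrangian splits into a Gibbs term in `σ` and a linear term in `η`; maximizing each
separately gives the two summands of `dualObj`. -/
lemma lagrangian_eq (σt : A → ℝ) (l : Φ → Fin K → ℝ) (x : (A → ℝ) × (Φ → Φ → ℝ)) :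
    lagrangian R σt l x =
      (shannonEntropy x.1 + ∑ a, x.1 a * -∑ f, ∑ k, R f a k * l f k) +
        ∑ f, ∑ g, x.2 f g * ∑ k, (∑ a, σt a * R g a k) * l f k := by
  have hσ : ∑ f, ∑ k, (∑ a, x.1 a * R f a k) * l f k =
      ∑ a, x.1 a * ∑ f, ∑ k, R f a k * l f k := by
    simp only [Finset.sum_mul, Finset.mul_sum, mul_assoc]
    exact (Finset.sum_congr rfl fun f _ => Finset.sum_comm).trans Finset.sum_comm
  have hη : ∀ f, ∑ k, (∑ g, x.2 f g * ∑ a, σt a * R g a k) * l f k =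
      ∑ g, x.2 f g * ∑ k, (∑ a, σt a * R g a k) * l f k := fun f => by
    simp only [Finset.sum_mul, Finset.mul_sum, mul_assoc]
    exact Finset.sum_comm
  simp only [lagrangian, iceResidual, LinearMap.coe_mk, AddHom.coe_mk, sub_mul,
    Finset.sum_sub_distrib, hσ, hη, mul_neg, Finset.sum_neg_distrib]
  ring

lemma concaveOn_shannonEntropy_fst :
    ConcaveOn ℝ (primalDomain Φ A) fun x => shannonEntropy x.1 :=
  (concaveOn_shannonEntropy.comp_linearMap (LinearMap.fst ℝ (A → ℝ) (Φ → Φ → ℝ))).subset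
    (fun _ hx => hx.1) convex_primalDomain

/-- Separating `(0, q)` from the closed convex set
`{(iceResidual x, t) | x ∈ primalDomain, t ≤ H(x.1)}` yields the multiplier `l`; the separating
functional is not vertical because `σt` is feasible. -/
lemma exists_forall_lagrangian_lt {σt : A → ℝ} (hσt : σt ∈ stdSimplex ℝ A) {q : ℝ}
    (hq : ∀ σ, memICE R σt σ → shannonEntropy σ < q) :
    ∃ l, ∀ x ∈ primalDomain Φ A, lagrangian R σt l x < q := by
  set S := hypographImage (primalDomain Φ A) (iceResidual R σt) fun x => shannonEntropy x.1
  have hS_convex : Convex ℝ S := concaveOn_shannonEntropy_fst.convex_hypographImage _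
  have hS_closed : IsClosed S := isCompact_primalDomain.isClosed_hypographImage
    (iceResidual R σt).continuous_of_finiteDimensional.continuousOn
    (continuous_shannonEntropy.comp continuous_fst).continuousOn
  have hq_notMem : ((0 : Φ → Fin K → ℝ), q) ∉ S := by
    rintro ⟨x, hx, hres, hqle⟩
    exact (hq x.1 ((memICE_iff R σt x.1).2 ⟨x.2, hx, hres⟩)).not_ge hqle
  obtain ⟨φ, u, hφS, hφq⟩ := geometric_hahn_banach_closed_point hS_convex hS_closed hq_notMem
  obtain ⟨c, hφ⟩ := φ.exists_apply_eq_sum_mul_add_mul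
  set μ := φ (0, 1)
  simp only [hφ, Pi.zero_apply, zero_mul, Finset.sum_const_zero, zero_add] at hφq
  have hμ : 0 < μ := by
    obtain ⟨η, hx, hres⟩ := (memICE_iff R σt σt).1 (memICE_self R hσt)
    have h := hφS (0, shannonEntropy σt) ⟨(σt, η), hx, hres, le_rfl⟩
    simp only [hφ, Pi.zero_apply, zero_mul, Finset.sum_const_zero, zero_add] at h
    nlinarith [hq σt (memICE_self R hσt)]
  refine ⟨fun f k => -c f k / μ, fun x hx => lt_of_mul_lt_mul_right ?_ hμ.le⟩
  have h := hφS (iceResidual R σt x, shannonEntropy x.1) ⟨x, hx, rfl, le_rfl⟩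
  rw [hφ] at h
  calc lagrangian R σt (fun f k => -c f k / μ) x * μ
      = ∑ f, ∑ k, iceResidual R σt x f k * c f k + shannonEntropy x.1 * μ := by
        simp only [lagrangian, sub_mul, Finset.sum_mul, mul_div_assoc']
        field_simp
        simp only [Finset.sum_neg_distrib]
        ring
    _ < q * μ := h.trans hφq

variable [Nonempty Φ] [Nonempty A]

lemma lagrangian_le_dualObj (σt : A → ℝ) (l : Φ → Fin K → ℝ)
    {x : (A → ℝ) × (Φ → Φ → ℝ)} (hx : x ∈ primalDomain Φ A) :
    lagrangian R σt l x ≤ dualObj R σt l := by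
  rw [lagrangian_eq, dualObj, add_comm (∑ f, _)]
  exact add_le_add (shannonEntropy_add_sum_mul_le hx.1 _)
    (Finset.sum_le_sum fun f _ => sum_mul_le_sup'_of_mem_stdSimplex (hx.2 f trivial) _)

lemma exists_lagrangian_eq_dualObj (σt : A → ℝ) (l : Φ → Fin K → ℝ) :
    ∃ x ∈ primalDomain Φ A, lagrangian R σt l x = dualObj R σt l := by
  classical
  choose g _ hg using fun f : Φ => exists_mem_eq_sup' univ_nonempty
    fun g => ∑ k, (∑ a, σt a * R g a k) * l f k
  refine ⟨(softmax fun a => -∑ f, ∑ k, R f a k * l f k, fun f => Pi.single (g f) 1),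
    ⟨softmax_mem_stdSimplex _, fun f _ => single_mem_stdSimplex ℝ (g f)⟩, ?_⟩
  rw [lagrangian_eq, shannonEntropy_softmax_add_sum_mul, dualObj, add_comm]
  simp [hg, Pi.single_apply]

lemma shannonEntropy_le_dualObj {σt σ : A → ℝ} (hσ : memICE R σt σ) (l : Φ → Fin K → ℝ) :
    shannonEntropy σ ≤ dualObj R σt l := by
  obtain ⟨η, hx, hres⟩ := (memICE_iff R σt σ).1 hσ
  calc shannonEntropy σ = lagrangian R σt l (σ, η) := by simp [lagrangian, hres]
    _ ≤ dualObj R σt l := lagrangian_le_dualObj R σt l hx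

end MaxEntICE

open MaxEntICE in
/-- **Strong duality for MaxEnt ICE.**
The maximum of the Shannon entropy over the ICE polytope determined by `σt`
(a nonempty compact convex set, so the maximum is attained) equals the infimum
of the dual objective `D(λ)` over all dual multipliers `λ ∈ (ℝ^K)^Φ`. -/
theorem maxEntICE_strong_duality
    {Φ A : Type*} [Fintype Φ] [Nonempty Φ] [Fintype A] [Nonempty A]
    {K : ℕ} (R : Φ → A → Fin K → ℝ)
    (σt : A → ℝ) (hσt : σt ∈ stdSimplex ℝ A) :
    (⨆ σh : {σ : A → ℝ // memICE R σt σ}, shannonEntropy σh.1) =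
      ⨅ l : Φ → Fin K → ℝ, dualObj R σt l := by
  have : Nonempty {σ : A → ℝ // memICE R σt σ} := ⟨⟨σt, memICE_self R hσt⟩⟩
  have hbddAbove :
      BddAbove (Set.range fun σh : {σ : A → ℝ // memICE R σt σ} => shannonEntropy σh.1) :=
    ⟨dualObj R σt 0, Set.forall_mem_range.2 fun σh => shannonEntropy_le_dualObj R σh.2 0⟩
  have hbddBelow : BddBelow (Set.range (dualObj R σt)) :=
    ⟨shannonEntropy σt, Set.forall_mem_range.2 (shannonEntropy_le_dualObj R (memICE_self R hσt))⟩
  refine le_antisymm (le_ciInf fun l => ciSup_le fun σh => shannonEntropy_le_dualObj R σh.2 l) ?_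
  refine le_of_forall_pos_lt_add fun ε hε => ?_
  obtain ⟨l, hl⟩ := exists_forall_lagrangian_lt R hσt fun σ hσ =>
    (le_ciSup hbddAbove ⟨σ, hσ⟩).trans_lt (lt_add_of_pos_right _ hε)
  obtain ⟨x, hx, hxl⟩ := exists_lagrangian_eq_dualObj R σt l
  exact (ciInf_le hbddBelow l).trans_lt (hxl ▸ hl x hx)
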